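/- arXiv:1608.07395 — 3 statements merged into one kernel-verified Lean document; each statement's English description precedes it below -/
import Mathlib

section
/- Let A be a unital Banach algebra and let g be invertible in A and h invertible in A. Then in the group GL₂(A) of invertible 2×2 matrices over A, the commutator diag(ghg⁻¹h⁻¹, 1) equals a product of elements each of which lies in the connected component of the identity of GL₂(A); in particular diag(ghg⁻¹h⁻¹, 1) lies in the path component of the identity of GL₂(A). -/
/-!
Over any ring, `diag(u, u⁻¹)` is a product of six elementary matrices `[[1, x], [0, 1]]` and
`[[1, 0], [x, 1]]`, and each of these is joined to the identity along a path from `x` to `0`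
(`A` is a real vector space, hence path connected). So `diag(u, u⁻¹)` lies in the identity path
component of `GL₂(A)`, which is a subgroup, and
`diag(ghg⁻¹h⁻¹, 1) = diag(gh, (gh)⁻¹) · diag(g⁻¹, g) · diag(h⁻¹, h)`.
-/

theorem Continuous.mem_pathComponentOne {X G : Type*} [TopologicalSpace X] [PathConnectedSpace X]
    [Group G] [TopologicalSpace G] [IsTopologicalGroup G] {f : X → G} (hf : Continuous f)
    {x₀ : X} (h₀ : f x₀ = 1) (x : X) : f x ∈ Subgroup.pathComponentOne G :=
  show Joined 1 (f x) from h₀ ▸ (PathConnectedSpace.joined x₀ x).map hf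

namespace Matrix

variable {R : Type*} [Ring R]

def transvection₁₂ (x : R) : (Matrix (Fin 2) (Fin 2) R)ˣ where
  val := !![1, x; 0, 1]
  inv := !![1, -x; 0, 1]
  val_inv := by simp [one_fin_two]
  inv_val := by simp [one_fin_two]

def transvection₂₁ (x : R) : (Matrix (Fin 2) (Fin 2) R)ˣ where
  val := !![1, 0; x, 1]
  inv := !![1, 0; -x, 1]
  val_inv := by simp [one_fin_two]
  inv_val := by simp [one_fin_two]

def diagUnit (u v : Rˣ) : (Matrix (Fin 2) (Fin 2) R)ˣ where
  val := diagonal ![(u : R), v]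
  inv := diagonal ![(↑u⁻¹ : R), ↑v⁻¹]
  val_inv := by simp [diagonal_fin_two, one_fin_two]
  inv_val := by simp [diagonal_fin_two, one_fin_two]

theorem transvection₁₂_zero : transvection₁₂ (0 : R) = 1 := by
  ext : 1
  simp [transvection₁₂, one_fin_two]

theorem transvection₂₁_zero : transvection₂₁ (0 : R) = 1 := by
  ext : 1
  simp [transvection₂₁, one_fin_two]

theorem diagUnit_mul (u v u' v' : Rˣ) :
    diagUnit u v * diagUnit u' v' = diagUnit (u * u') (v * v') := by
  ext : 1
  simp [diagUnit, diagonal_fin_two]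

/-- `w(u) := E₁₂(u) E₂₁(-u⁻¹) E₁₂(u) = [[0, u], [-u⁻¹, 0]]`, and `diag(u, u⁻¹) = w(u) w(-1)`. -/
theorem diagUnit_inv_eq_transvection_prod (u : Rˣ) :
    diagUnit u u⁻¹ =
      transvection₁₂ (u : R) * transvection₂₁ (-(↑u⁻¹ : R)) * transvection₁₂ (u : R) *
        (transvection₁₂ (-1) * transvection₂₁ 1 * transvection₁₂ (-1)) := by
  ext : 1
  simp [diagUnit, transvection₁₂, transvection₂₁, diagonal_fin_two]

theorem diagUnit_commutator_one (g h : Rˣ) :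
    diagUnit (g * h * g⁻¹ * h⁻¹) 1 =
      diagUnit (g * h) (g * h)⁻¹ * diagUnit g⁻¹ g * diagUnit h⁻¹ h := by
  simp only [diagUnit_mul]
  congr 1
  group

variable [TopologicalSpace R] [IsTopologicalRing R] [PathConnectedSpace R]

theorem transvection₁₂_mem_pathComponentOne (x : R) :
    transvection₁₂ x ∈ Subgroup.pathComponentOne (Matrix (Fin 2) (Fin 2) R)ˣ :=
  (Units.continuous_iff.2 ⟨by fun_prop, by fun_prop⟩).mem_pathComponentOne transvection₁₂_zero x

theorem transvection₂₁_mem_pathComponentOne (x : R) :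
    transvection₂₁ x ∈ Subgroup.pathComponentOne (Matrix (Fin 2) (Fin 2) R)ˣ :=
  (Units.continuous_iff.2 ⟨by fun_prop, by fun_prop⟩).mem_pathComponentOne transvection₂₁_zero x

theorem diagUnit_inv_mem_pathComponentOne (u : Rˣ) :
    diagUnit u u⁻¹ ∈ Subgroup.pathComponentOne (Matrix (Fin 2) (Fin 2) R)ˣ := by
  have h₁₂ := transvection₁₂_mem_pathComponentOne (R := R)
  have h₂₁ := transvection₂₁_mem_pathComponentOne (R := R)
  rw [diagUnit_inv_eq_transvection_prod]
  exact mul_mem (mul_mem (mul_mem (h₁₂ _) (h₂₁ _)) (h₁₂ _))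
    (mul_mem (mul_mem (h₁₂ _) (h₂₁ _)) (h₁₂ _))

end Matrix

theorem whitehead_commutator_in_identity_component_general
    {A : Type} [NormedRing A] [NormedAlgebra ℂ A]
    (g h : Aˣ) :
    ∃ γ : ℝ → Matrix (Fin 2) (Fin 2) A,
      Continuous γ ∧
      γ 0 = (1 : Matrix (Fin 2) (Fin 2) A) ∧
      γ 1 = Matrix.diagonal ![((g : A) * h * ↑g⁻¹ * ↑h⁻¹), 1] ∧
      ∀ t : ℝ, IsUnit (γ t) := by
  have hmem : Matrix.diagUnit (g * h * g⁻¹ * h⁻¹) 1 ∈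
      Subgroup.pathComponentOne (Matrix (Fin 2) (Fin 2) A)ˣ := by
    rw [Matrix.diagUnit_commutator_one]
    have hdiag := Matrix.diagUnit_inv_mem_pathComponentOne (R := A)
    exact mul_mem (mul_mem (hdiag _) (hdiag _)) (hdiag _)
  obtain ⟨γ⟩ := hmem
  exact ⟨fun t ↦ γ.extend t, Units.continuous_val.comp γ.continuous_extend, by simp,
    by simp only [γ.extend_one]; simp [Matrix.diagUnit], fun _ ↦ Units.isUnit _⟩

/-- Whitehead lemma variant: for invertible elements `g, h` of a unital Banach algebra `A`,
the diagonal matrix `diag(ghg⁻¹h⁻¹, 1)` lies in the path component of the identity of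
`GL₂(A)`: there is a continuous path of invertible `2 × 2` matrices over `A` from the
identity matrix to `diag(ghg⁻¹h⁻¹, 1)`. -/
theorem whitehead_commutator_in_identity_component
    {A : Type} [NormedRing A] [NormedAlgebra ℂ A] [CompleteSpace A]
    (g h : Aˣ) :
    ∃ γ : ℝ → Matrix (Fin 2) (Fin 2) A,
      Continuous γ ∧
      γ 0 = (1 : Matrix (Fin 2) (Fin 2) A) ∧
      γ 1 = Matrix.diagonal ![((g : A) * h * ↑g⁻¹ * ↑h⁻¹), 1] ∧
      ∀ t : ℝ, IsUnit (γ t) :=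
  whitehead_commutator_in_identity_component_general g h
end

section
/- Let N be a semifinite von Neumann algebra with faithful normal semifinite trace τ. If x ∈ N is self-adjoint with ‖x‖ ≤ π, then e^{ix} − 1 lies in the trace ideal L¹_τ(N) if and only if x lies in L¹_τ(N). -/
set_option synthInstance.maxHeartbeats 1000000
set_option maxHeartbeats 1000000

open scoped ENNReal NNReal

variable {H : Type} [NormedAddCommGroup H] [InnerProductSpace ℂ H] [CompleteSpace H]

/-- The absolute value `|x| = (x*x)^{1/2}` of a bounded operator, via the
continuous functional calculus. -/
noncomputable def absOp (x : H →L[ℂ] H) : H →L[ℂ] H := CFC.sqrt (star x * x)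

/-- `τ : N₊ → [0,∞]` is a faithful normal semifinite trace on the von Neumann algebra `N`.
The function `τ` is defined on all operators but its properties only concern positive
elements of `N`. -/
structure IsFNSTrace (N : VonNeumannAlgebra H) (τ : (H →L[ℂ] H) → ℝ≥0∞) : Prop where
  map_zero : τ 0 = 0
  additive : ∀ x y : H →L[ℂ] H, x ∈ N → y ∈ N → 0 ≤ x → 0 ≤ y → τ (x + y) = τ x + τ y
  homogeneous : ∀ (c : ℝ≥0) (x : H →L[ℂ] H), x ∈ N → 0 ≤ x → τ (c • x) = c * τ x
  tracial : ∀ x : H →L[ℂ] H, x ∈ N → τ (star x * x) = τ (x * star x)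
  faithful : ∀ x : H →L[ℂ] H, x ∈ N → 0 ≤ x → τ x = 0 → x = 0
  monotone : ∀ x y : H →L[ℂ] H, x ∈ N → y ∈ N → 0 ≤ x → x ≤ y → τ x ≤ τ y
  normal : ∀ (ι : Type) (_ : Preorder ι) (f : ι → (H →L[ℂ] H)) (x : H →L[ℂ] H),
      (∀ i, f i ∈ N) → (∀ i, 0 ≤ f i) → Monotone f → IsLUB (Set.range f) x →
      τ x = ⨆ i, τ (f i)
  semifinite : ∀ x : H →L[ℂ] H, x ∈ N → 0 ≤ x → x ≠ 0 →
      ∃ y : H →L[ℂ] H, y ∈ N ∧ 0 ≤ y ∧ y ≤ x ∧ y ≠ 0 ∧ τ y < ∞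

/-- Membership in the trace ideal `L¹_τ(N) = {x ∈ N : τ(|x|) < ∞}`. -/
def MemL1 (N : VonNeumannAlgebra H) (τ : (H →L[ℂ] H) → ℝ≥0∞) (x : H →L[ℂ] H) : Prop :=
  x ∈ N ∧ τ (absOp x) < ∞

/-- The norm `‖x‖_{1,∞} = ‖x‖ + τ(|x|)` on the trace ideal. -/
noncomputable def normL1 (τ : (H →L[ℂ] H) → ℝ≥0∞) (x : H →L[ℂ] H) : ℝ :=
  ‖x‖ + (τ (absOp x)).toReal

/-!
Write `g t = ‖e^{it} - 1‖ = 2 |sin (t / 2)|`. By the functional calculus, `|e^{ix} - 1| = g(x)` and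
`|x| = |·|(x)`. On `[-π, π]`, which contains the spectrum of `x`, we have `g t ≤ |t|` and, by
Jordan's inequality, `|t| ≤ (π / 2) g t`. Hence `|e^{ix} - 1| ≤ |x| ≤ (π / 2) |e^{ix} - 1|`, and
monotonicity and homogeneity of `τ` transfer finiteness of the trace in both directions.
-/

open scoped Real

lemma Real.abs_le_pi_div_two_mul_norm_exp_I_mul_ofReal_sub_one {t : ℝ} (ht : |t| ≤ π) :
    |t| ≤ π / 2 * ‖Complex.exp (Complex.I * t) - 1‖ := by
  have hjordan := Real.mul_abs_le_abs_sin (x := t / 2) (by rw [abs_div, abs_two]; linarith)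
  rw [abs_div, abs_two] at hjordan
  rw [Complex.norm_exp_I_mul_ofReal_sub_one, norm_mul, Real.norm_eq_abs, Real.norm_eq_abs,
    abs_two]
  have := Real.pi_pos
  field_simp at hjordan ⊢
  linarith

namespace VonNeumannAlgebra

instance isClosed (N : VonNeumannAlgebra H) : IsClosed (N : Set (H →L[ℂ] H)) := by
  rw [← N.centralizer_centralizer]
  exact Set.isClosed_centralizer _

instance instSMulMemClass : SMulMemClass (VonNeumannAlgebra H) ℂ (H →L[ℂ] H) where
  smul_mem {N} c _ hx := N.toStarSubalgebra.smul_mem hx c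

lemma absOp_mem (N : VonNeumannAlgebra H) {x : H →L[ℂ] H} (hx : x ∈ N) : absOp x ∈ N := by
  rw [absOp, CFC.sqrt_eq_real_sqrt _ (star_mul_self_nonneg x), cfcₙ_eq_cfc]
  exact cfc_mem _ (mul_mem (star_mem hx) hx)

end VonNeumannAlgebra

lemma absOp_cfc_of_isSelfAdjoint {x : H →L[ℂ] H} (hx : IsSelfAdjoint x) (f : ℂ → ℂ)
    (hf : ContinuousOn f (spectrum ℂ x) := by cfc_cont_tac) :
    absOp (cfc f x) = cfc (fun t : ℝ => ‖f t‖) x := by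
  have := hx.isStarNormal
  rw [cfc_real_eq_complex _ hx]
  change CFC.abs _ = _
  rw [CFC.abs_eq_cfcₙ_coe_norm ℂ (cfc f x), cfcₙ_eq_cfc, ← cfc_comp' ..]
  refine cfc_congr fun z hz => ?_
  have hz_real : (z.re : ℂ) = z := hx.spectrumRestricts.rightInvOn hz
  rw [hz_real]; rfl

lemma IsFNSTrace.lt_top_of_le_smul {N : VonNeumannAlgebra H} {τ : (H →L[ℂ] H) → ℝ≥0∞}
    (hτ : IsFNSTrace N τ) {a b : H →L[ℂ] H} (ha : a ∈ N) (hb : b ∈ N) (ha₀ : 0 ≤ a)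
    (hb₀ : 0 ≤ b) {c : ℝ≥0} (hab : a ≤ c • b) (hbτ : τ b < ∞) : τ a < ∞ :=
  calc τ a ≤ τ (c • b) := hτ.monotone _ _ ha (SMulMemClass.smul_mem (c : ℂ) hb) ha₀ hab
    _ = c * τ b := hτ.homogeneous c b hb hb₀
    _ < ∞ := ENNReal.mul_lt_top ENNReal.coe_lt_top hbτ

lemma memL1_iff_of_absOp_le_of_le_smul {N : VonNeumannAlgebra H}
    {τ : (H →L[ℂ] H) → ℝ≥0∞} (hτ : IsFNSTrace N τ) {x y : H →L[ℂ] H} (hx : x ∈ N)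
    (hy : y ∈ N) {c : ℝ≥0} (hyx : absOp y ≤ absOp x) (hxy : absOp x ≤ c • absOp y) :
    MemL1 N τ y ↔ MemL1 N τ x := by
  have hxN := N.absOp_mem hx
  have hyN := N.absOp_mem hy
  constructor
  · rintro ⟨-, hyτ⟩
    exact ⟨hx, hτ.lt_top_of_le_smul hxN hyN (CFC.abs_nonneg x) (CFC.abs_nonneg y) hxy hyτ⟩
  · rintro ⟨-, hxτ⟩
    exact ⟨hy, (hτ.monotone _ _ hyN hxN (CFC.abs_nonneg y) hyx).trans_lt hxτ⟩

/-- For a self-adjoint `x ∈ N` with `‖x‖ ≤ π`, the element `e^{ix} - 1` lies in the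
trace ideal `L¹_τ(N)` if and only if `x` does. -/
theorem expI_sub_one_memL1_iff (N : VonNeumannAlgebra H)
    (τ : (H →L[ℂ] H) → ℝ≥0∞) (hτ : IsFNSTrace N τ)
    (x : H →L[ℂ] H) (hx : IsSelfAdjoint x) (hxN : x ∈ N) (hnorm : ‖x‖ ≤ Real.pi) :
    MemL1 N τ (cfc (fun z : ℂ => Complex.exp (Complex.I * z)) x - 1) ↔ MemL1 N τ x := by
  have hspec : ∀ t ∈ spectrum ℝ x, |t| ≤ π := fun t ht =>
    calc |t| ≤ ‖x‖ * ‖(1 : H →L[ℂ] H)‖ := spectrum.norm_le_norm_mul_of_mem ht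
      _ ≤ ‖x‖ := mul_le_of_le_one_right (norm_nonneg x) ContinuousLinearMap.norm_id_le
      _ ≤ π := hnorm
  set g : ℝ → ℝ := fun t => ‖Complex.exp (Complex.I * t) - 1‖
  have habs_exp : absOp (cfc (fun z : ℂ => Complex.exp (Complex.I * z)) x - 1) = cfc g x := by
    rw [← cfc_const_one ℂ x, ← cfc_sub .., absOp_cfc_of_isSelfAdjoint hx _]
  have habs : absOp x = cfc (‖·‖) x := CFC.abs_eq_cfc_norm x
  refine memL1_iff_of_absOp_le_of_le_smul hτ hxN (sub_mem (cfc_mem _ hxN) (one_mem N))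
    (c := NNReal.pi / 2) ?_ ?_
  · rw [habs_exp, habs]
    exact cfc_mono fun t _ => Real.norm_exp_I_mul_ofReal_sub_one_le
  · rw [habs_exp, habs, ← cfc_smul (NNReal.pi / 2) g x]
    refine cfc_mono fun t ht => ?_
    simpa [NNReal.smul_def] using
      Real.abs_le_pi_div_two_mul_norm_exp_I_mul_ofReal_sub_one (hspec t ht)
end

section
/- Let N be a semifinite von Neumann algebra with faithful normal semifinite trace τ. Let u ∈ N be unitary with u − 1 ∈ L¹_τ(N). Then there is a self-adjoint x ∈ L¹_τ(N) with ‖x‖ ≤ π and u = e^{ix}, and the path t ↦ e^{itx} is a continuous path (with respect to the norm ‖·‖_{1,∞} on 1 + L¹_τ(N)) from 1 to u. In particular, the group U₁(L¹_τ(N)) = {u unitary in N : u − 1 ∈ L¹_τ(N)} is path connected in the ‖·‖_{1,∞}-topology. -/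
/-!
A logarithm `-i log u` is a discontinuous function of `u`, so it is built as a strong limit of
continuous functional calculus. The functions `argApprox n` are continuous on the unit circle,
agree with `arg` away from `-1` and equal `π` near `-1`. Because they change with `n` only where
the monotone cutoffs `cutoff n ∘ re` do, `‖(argApprox n (u) - argApprox m (u)) ξ‖²` is bounded by
`4π²` times the decrease of the convergent sequence `⟪cutoff n (Re u) ξ, ξ⟫`, so `argApprox n (u)`
converges strongly to some `X`. Strong limits preserve self-adjointness, membership in `N = N''`
and the bound `π`, and `exp (i X) = u` because `exp (i argApprox n (u))` converges strongly to `u`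
as well.

For `|s| ≤ π` one has `|s| ≤ (π/2) |e^{is} - 1|`, and `|e^{isx} - e^{itx}| ≤ |s - t| |x|`; through
the functional calculus of `X` and the monotonicity and homogeneity of `τ` these give
`τ(|X|) ≤ (π/2) τ(|u - 1|)` and `‖e^{isX} - e^{itX}‖_{1,∞} ≤ |s - t| ‖X‖_{1,∞}`.
-/

set_option synthInstance.maxHeartbeats 1000000
set_option maxHeartbeats 1000000

open scoped ENNReal NNReal

variable {H : Type} [NormedAddCommGroup H] [InnerProductSpace ℂ H] [CompleteSpace H]

open scoped Real ComplexOrder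
open Complex Filter Topology

noncomputable section

lemma norm_exp_I_mul_sub_exp_I_mul_le (x y : ℝ) :
    ‖exp (I * x) - exp (I * y)‖ ≤ |x - y| := by
  have : exp (I * x) - exp (I * y) = exp (I * y) * (exp (I * (x - y : ℝ)) - 1) := by
    rw [mul_sub, mul_one, ← exp_add]; push_cast; ring_nf
  rw [this, norm_mul, norm_exp_I_mul_ofReal, one_mul, ← Real.norm_eq_abs]
  exact Real.norm_exp_I_mul_ofReal_sub_one_le

lemma norm_exp_I_mul_real_mul_sub_le (s t : ℝ) {z : ℂ} (hz : z = (z.re : ℂ)) :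
    ‖exp (I * s * z) - exp (I * t * z)‖ ≤ ‖s - t‖₊ * ‖z‖ := by
  rw [hz, mul_assoc, mul_assoc, ← ofReal_mul, ← ofReal_mul, norm_real, coe_nnnorm,
    Real.norm_eq_abs, Real.norm_eq_abs, ← abs_mul, sub_mul]
  exact norm_exp_I_mul_sub_exp_I_mul_le _ _

lemma abs_le_pi_div_two_mul_norm_exp_I_mul_sub_one {x : ℝ} (hx : |x| ≤ π) :
    |x| ≤ π / 2 * ‖exp (I * x) - 1‖ := by
  have key : ∀ y : ℝ, 0 ≤ y → y ≤ π → y ≤ π / 2 * (2 * |Real.sin (y / 2)|) := by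
    intro y h0 hπ
    have := Real.pi_pos
    have := Real.mul_le_sin (x := y / 2) (by linarith) (by linarith)
    rw [abs_of_nonneg (this.trans' (by positivity))]
    calc y = π / 2 * (2 * (2 / π * (y / 2))) := by field_simp
      _ ≤ _ := by gcongr
  rw [norm_exp_I_mul_ofReal_sub_one, norm_mul, Real.norm_two, Real.norm_eq_abs]
  rcases le_total 0 x with h | h
  · rw [abs_of_nonneg h] at hx ⊢
    exact key x h hx
  · rw [abs_of_nonpos h] at hx ⊢
    simpa [neg_div, Real.sin_neg, abs_neg] using key (-x) (by linarith) hx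

def ramp (a b x : ℝ) : ℝ := max 0 (min 1 ((b - x) / (b - a)))

lemma ramp_nonneg (a b x : ℝ) : 0 ≤ ramp a b x := le_max_left _ _

lemma ramp_le_one (a b x : ℝ) : ramp a b x ≤ 1 := max_le zero_le_one (min_le_left _ _)

lemma ramp_of_le {a b x : ℝ} (hab : a < b) (hx : x ≤ a) : ramp a b x = 1 := by
  have : 1 ≤ (b - x) / (b - a) := by rw [le_div_iff₀ (by linarith)]; linarith
  simp [ramp, min_eq_left this]

lemma ramp_of_ge {a b x : ℝ} (hab : a < b) (hx : b ≤ x) : ramp a b x = 0 := by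
  have : (b - x) / (b - a) ≤ 0 := div_nonpos_of_nonpos_of_nonneg (by linarith) (by linarith)
  simp [ramp, min_eq_right (this.trans zero_le_one), this]

lemma continuous_ramp (a b : ℝ) : Continuous (ramp a b) := by
  unfold ramp
  fun_prop

def dyadicAngle (n : ℕ) : ℝ := π / 2 ^ n

lemma dyadicAngle_pos (n : ℕ) : 0 < dyadicAngle n := by unfold dyadicAngle; positivity

lemma dyadicAngle_le_pi (n : ℕ) : dyadicAngle n ≤ π :=
  div_le_self Real.pi_pos.le (one_le_pow₀ one_le_two)

lemma dyadicAngle_succ_lt (n : ℕ) : dyadicAngle (n + 1) < dyadicAngle n := by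
  unfold dyadicAngle
  rw [pow_succ, ← div_div]
  exact half_lt_self (by positivity)

lemma tendsto_dyadicAngle : Tendsto dyadicAngle atTop (𝓝 0) := by
  have := (tendsto_pow_atTop_nhds_zero_of_lt_one (r := (2 : ℝ)⁻¹) (by norm_num)
    (by norm_num)).const_mul π
  rw [mul_zero] at this
  convert this using 2 with n
  rw [dyadicAngle, inv_pow, div_eq_mul_inv]

def threshold (n : ℕ) : ℝ := -Real.cos (dyadicAngle n)

lemma threshold_succ_lt (n : ℕ) : threshold (n + 1) < threshold n :=
  neg_lt_neg <| Real.cos_lt_cos_of_nonneg_of_le_pi (dyadicAngle_pos _).le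
    (dyadicAngle_le_pi n) (dyadicAngle_succ_lt n)

lemma neg_one_lt_threshold (n : ℕ) : -1 < threshold n := by
  have := Real.cos_lt_cos_of_nonneg_of_le_pi le_rfl (dyadicAngle_le_pi n) (dyadicAngle_pos n)
  rw [Real.cos_zero] at this
  unfold threshold
  linarith

def cutoff (n : ℕ) (x : ℝ) : ℝ := ramp (threshold (n + 1)) (threshold n) x

lemma cutoff_of_le {n : ℕ} {x : ℝ} (hx : x ≤ threshold (n + 1)) : cutoff n x = 1 :=
  ramp_of_le (threshold_succ_lt n) hx

lemma cutoff_of_ge {n : ℕ} {x : ℝ} (hx : threshold n ≤ x) : cutoff n x = 0 :=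
  ramp_of_ge (threshold_succ_lt n) hx

lemma cutoff_nonneg (n : ℕ) (x : ℝ) : 0 ≤ cutoff n x := ramp_nonneg _ _ _

lemma cutoff_le_one (n : ℕ) (x : ℝ) : cutoff n x ≤ 1 := ramp_le_one _ _ _

@[fun_prop]
lemma continuous_cutoff (n : ℕ) : Continuous (cutoff n) := continuous_ramp _ _

lemma cutoff_antitone (x : ℝ) : Antitone (cutoff · x) := by
  refine antitone_nat_of_succ_le fun n => ?_
  rcases le_total x (threshold (n + 1)) with hx | hx
  · rw [cutoff_of_le hx]
    exact cutoff_le_one _ _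
  · rw [cutoff_of_ge hx]
    exact cutoff_nonneg _ _

/-- Continuous approximants, on the unit circle, of `arg`: near `-1`, where `arg` jumps, they are
moved to `π`. -/
def argApprox (n : ℕ) (z : ℂ) : ℝ := (1 - cutoff n z.re) * arg z + cutoff n z.re * π

lemma abs_argApprox_le (n : ℕ) (z : ℂ) : |argApprox n z| ≤ π := by
  have := abs_le.1 (abs_arg_le_pi z)
  have := cutoff_nonneg n z.re
  have := cutoff_le_one n z.re
  rw [abs_le, argApprox]
  constructor <;> nlinarith [Real.pi_pos]

lemma argApprox_sub_sq_le {n m : ℕ} (hnm : n ≤ m) (z : ℂ) :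
    (argApprox n z - argApprox m z) ^ 2 ≤ 4 * π ^ 2 * (cutoff n z.re - cutoff m z.re) := by
  have hc := cutoff_antitone z.re hnm
  have hc1 := cutoff_nonneg m z.re
  have hc2 := cutoff_le_one n z.re
  have harg := abs_le.1 (abs_arg_le_pi z)
  have hsq : (π - arg z) ^ 2 ≤ 4 * π ^ 2 := by nlinarith [Real.pi_pos]
  have : argApprox n z - argApprox m z = (cutoff n z.re - cutoff m z.re) * (π - arg z) := by
    unfold argApprox; ring
  rw [this, mul_pow]
  calc (cutoff n z.re - cutoff m z.re) ^ 2 * (π - arg z) ^ 2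
      ≤ (cutoff n z.re - cutoff m z.re) * (4 * π ^ 2) := by
        gcongr
        nlinarith
    _ = _ := by ring

lemma norm_neg_one_sub_sq {z : ℂ} (hz : ‖z‖ = 1) : ‖-1 - z‖ ^ 2 = 2 + 2 * z.re := by
  have h := Complex.sq_norm z
  rw [hz, normSq_apply] at h
  rw [Complex.sq_norm, normSq_apply]
  simp only [sub_re, neg_re, one_re, sub_im, neg_im, one_im]
  nlinarith

lemma exp_I_mul_arg {z : ℂ} (hz : ‖z‖ = 1) : exp (I * arg z) = z := by
  simpa [hz, mul_comm] using norm_mul_exp_arg_mul_I z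

lemma argApprox_of_cutoff_eq_one {n : ℕ} {z : ℂ} (h : cutoff n z.re = 1) :
    argApprox n z = π := by
  simp [argApprox, h]

/-- Where `cutoff (n + 1) = 0` the exponential is exact, where it is `1` it equals `-1`, which is
close to `z`, and in between `cutoff n - cutoff (n + 2) = 1`. -/
lemma norm_exp_argApprox_sub_sq_le (n : ℕ) {z : ℂ} (hz : ‖z‖ = 1) :
    ‖exp (I * argApprox (n + 1) z) - z‖ ^ 2
      ≤ 4 * (cutoff n z.re - cutoff (n + 2) z.re) + dyadicAngle (n + 2) ^ 2 := by
  have hc := cutoff_antitone z.re (Nat.le_add_right n 2)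
  rcases le_total (threshold (n + 1)) z.re with h1 | h1
  · have : argApprox (n + 1) z = arg z := by simp [argApprox, cutoff_of_ge h1]
    rw [this, exp_I_mul_arg hz, sub_self, norm_zero]
    nlinarith
  rcases le_total z.re (threshold (n + 2)) with h2 | h2
  · rw [argApprox_of_cutoff_eq_one (cutoff_of_le h2), mul_comm, exp_pi_mul_I,
      norm_neg_one_sub_sq hz]
    have := Real.one_sub_sq_div_two_le_cos (x := dyadicAngle (n + 2))
    rw [threshold] at h2
    nlinarith
  · rw [cutoff_of_le h1, cutoff_of_ge h2]
    have : ‖exp (I * argApprox (n + 1) z) - z‖ ≤ 2 := by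
      calc _ ≤ ‖exp (I * argApprox (n + 1) z)‖ + ‖z‖ := norm_sub_le _ _
        _ = 2 := by rw [norm_exp_I_mul_ofReal, hz]; norm_num
    nlinarith [norm_nonneg (exp (I * argApprox (n + 1) z) - z)]

lemma continuousOn_argApprox (n : ℕ) :
    ContinuousOn (fun z => (argApprox n z : ℂ)) (Metric.sphere 0 1) := by
  have hcut : Continuous fun z : ℂ => cutoff n z.re := by fun_prop
  intro z hz
  refine (continuous_ofReal.continuousAt.comp ?_).continuousWithinAt
  by_cases hslit : z ∈ slitPlane
  · exact ((continuousAt_const.sub hcut.continuousAt).mul (continuousAt_arg hslit)).add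
      (hcut.continuousAt.mul continuousAt_const)
  -- off the slit plane, the only point of the circle is `-1`, where `argApprox n` is locally `π`
  have hre : z.re < threshold (n + 1) := by
    rw [mem_slitPlane_iff, not_or, not_lt, not_ne_iff] at hslit
    have : |z.re| = 1 := by rw [abs_re_eq_norm.2 hslit.2, ← mem_sphere_zero_iff_norm.1 hz]
    have := neg_one_lt_threshold (n + 1)
    rw [abs_of_nonpos hslit.1] at *
    linarith
  have hev : ∀ᶠ w in 𝓝 z, argApprox n w = π := by
    filter_upwards [(continuous_re.isOpen_preimage _ isOpen_Iio).mem_nhds hre] with w hw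
    exact argApprox_of_cutoff_eq_one (cutoff_of_le (le_of_lt hw))
  exact continuousAt_const.congr (hev.mono fun w hw => hw.symm)

lemma cauchySeq_of_dist_sq_le {E : Type*} [PseudoMetricSpace E] {f : ℕ → E} {a : ℕ → ℝ}
    (ha : Antitone a) (hbdd : BddBelow (Set.range a)) {C : ℝ}
    (h : ∀ n m, n ≤ m → dist (f n) (f m) ^ 2 ≤ C * (a n - a m)) : CauchySeq f := by
  have hlim := tendsto_atTop_ciInf ha hbdd
  refine cauchySeq_of_le_tendsto_0 (fun N => √(|C| * (a N - ⨅ k, a k)))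
    (fun n m N hn hm => ?_) ?_
  · wlog hnm : n ≤ m generalizing n m
    · rw [dist_comm]; exact this m n hm hn (le_of_not_ge hnm)
    refine Real.le_sqrt_of_sq_le ((h n m hnm).trans ?_)
    have := ha hn
    have := ha hnm
    have := ciInf_le hbdd m
    calc C * (a n - a m) ≤ |C| * (a n - a m) :=
          mul_le_mul_of_nonneg_right (le_abs_self C) (by linarith)
      _ ≤ |C| * (a N - ⨅ k, a k) := by gcongr
  · simpa using ((hlim.sub_const (⨅ k, a k)).const_mul |C|).sqrt

namespace ContinuousLinearMap

section Normed

variable {𝕜 E : Type*} [RCLike 𝕜] [NormedAddCommGroup E] [NormedSpace 𝕜 E]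

lemma exists_tendsto_apply_of_cauchySeq [CompleteSpace E] {A : ℕ → E →L[𝕜] E}
    (hA : ∀ ξ, CauchySeq (A · ξ)) :
    ∃ X : E →L[𝕜] E, ∀ ξ, Tendsto (A · ξ) atTop (𝓝 (X ξ)) := by
  choose f hf using fun ξ => cauchySeq_tendsto_of_complete (hA ξ)
  exact ⟨continuousLinearMapOfTendsto A (tendsto_pi_nhds.2 hf), hf⟩

lemma commute_of_tendsto_apply {ι : Type*} {l : Filter ι} [l.NeBot] {A : ι → E →L[𝕜] E}
    {X B : E →L[𝕜] E} (hA : ∀ i, Commute (A i) B)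
    (hX : ∀ ξ, Tendsto (A · ξ) l (𝓝 (X ξ))) : Commute X B := by
  ext ξ
  refine tendsto_nhds_unique (hX (B ξ)) ?_
  have : (fun i => A i (B ξ)) = fun i => B (A i ξ) := funext fun i => congrArg (· ξ) (hA i).eq
  rw [this]
  exact (B.continuous.tendsto _).comp (hX ξ)

end Normed

section Inner

variable {𝕜 E : Type*} [RCLike 𝕜] [NormedAddCommGroup E] [InnerProductSpace 𝕜 E]

lemma isSelfAdjoint_of_tendsto_apply [CompleteSpace E] {ι : Type*} {l : Filter ι} [l.NeBot]
    {A : ι → E →L[𝕜] E} {X : E →L[𝕜] E} (hA : ∀ i, IsSelfAdjoint (A i))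
    (hX : ∀ ξ, Tendsto (A · ξ) l (𝓝 (X ξ))) : IsSelfAdjoint X := by
  rw [isSelfAdjoint_iff_isSymmetric]
  intro ξ η
  refine tendsto_nhds_unique ((hX ξ).inner (𝕜 := 𝕜) (tendsto_const_nhds (x := η))) ?_
  have : (fun i => inner 𝕜 (A i ξ) η) = fun i => inner 𝕜 ξ (A i η) :=
    funext fun i => isSelfAdjoint_iff_isSymmetric.1 (hA i) ξ η
  rw [this]
  exact (tendsto_const_nhds (x := ξ)).inner (hX η)

lemma re_inner_le_of_le {T S : E →L[𝕜] E} (h : T ≤ S) (ξ : E) :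
    RCLike.re (inner 𝕜 (T ξ) ξ) ≤ RCLike.re (inner 𝕜 (S ξ) ξ) := by
  have := ((le_def T S).1 h).re_inner_nonneg_left ξ
  simp only [sub_apply, inner_sub_left, map_sub] at this
  linarith

lemma norm_apply_sq_le_of_star_mul_self_le [CompleteSpace E] {T S : E →L[𝕜] E}
    (h : star T * T ≤ S) (ξ : E) : ‖T ξ‖ ^ 2 ≤ RCLike.re (inner 𝕜 (S ξ) ξ) := by
  rw [apply_norm_sq_eq_inner_adjoint_left, ← star_eq_adjoint]
  exact re_inner_le_of_le h ξ

end Inner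

end ContinuousLinearMap

namespace VonNeumannAlgebra

lemma isClosed_s8 (N : VonNeumannAlgebra H) : IsClosed (N : Set (H →L[ℂ] H)) := by
  rw [← N.centralizer_centralizer]
  exact Set.isClosed_centralizer _

lemma cfc_mem (N : VonNeumannAlgebra H) {a : H →L[ℂ] H} (ha : a ∈ N) (f : ℂ → ℂ) :
    cfc f a ∈ N :=
  _root_.cfc_mem (s := N.toStarSubalgebra) (hs := N.isClosed_s8) f ha

lemma mem_of_tendsto_apply (N : VonNeumannAlgebra H) {A : ℕ → H →L[ℂ] H} {X : H →L[ℂ] H}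
    (hA : ∀ n, A n ∈ N) (hX : ∀ ξ, Tendsto (A · ξ) atTop (𝓝 (X ξ))) : X ∈ N := by
  rw [← SetLike.mem_coe, ← N.centralizer_centralizer, Set.mem_centralizer_iff]
  intro y hy
  exact (ContinuousLinearMap.commute_of_tendsto_apply (fun n => hy (A n) (hA n)) hX).eq.symm

end VonNeumannAlgebra

section FunctionalCalculus

variable {a : H →L[ℂ] H}

lemma norm_le_norm_of_mem_spectrum {z : ℂ} (hz : z ∈ spectrum ℂ a) : ‖z‖ ≤ ‖a‖ :=
  (spectrum.norm_le_norm_mul_of_mem hz).trans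
    (mul_le_of_le_one_right (norm_nonneg a) ContinuousLinearMap.norm_id_le)

lemma norm_cfc_le_mul_norm {f : ℂ → ℂ} {r : ℝ} (hr : 0 ≤ r)
    (hfa : ∀ z ∈ spectrum ℂ a, ‖f z‖ ≤ r * ‖z‖) : ‖cfc f a‖ ≤ r * ‖a‖ :=
  norm_cfc_le (by positivity) fun z hz =>
    (hfa z hz).trans (mul_le_mul_of_nonneg_left (norm_le_norm_of_mem_spectrum hz) hr)

lemma isSelfAdjoint_cfc_ofReal (a : H →L[ℂ] H) (g : ℂ → ℝ) :
    IsSelfAdjoint (cfc (fun z => (g z : ℂ)) a) := by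
  rw [IsSelfAdjoint, ← cfc_star]
  exact cfc_congr fun z _ => conj_ofReal _

lemma star_cfc_mul_cfc_le {f : ℂ → ℂ} {g : ℂ → ℝ} (hf : ContinuousOn f (spectrum ℂ a))
    (hg : ContinuousOn g (spectrum ℂ a)) (hfg : ∀ z ∈ spectrum ℂ a, ‖f z‖ ^ 2 ≤ g z) :
    star (cfc f a) * cfc f a ≤ cfc (fun z => (g z : ℂ)) a := by
  rw [← cfc_star, ← cfc_mul ..]
  refine cfc_mono (fun z hz => ?_) (hf.star.mul hf) (continuous_ofReal.comp_continuousOn hg)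
  rw [star_def, conj_mul', ← ofReal_pow, real_le_real]
  exact hfg z hz

lemma norm_cfc_apply_le {f : ℂ → ℂ} (hf : ContinuousOn f (spectrum ℂ a))
    (hfa : ∀ z ∈ spectrum ℂ a, ‖f z‖ ≤ ‖z‖) (ξ : H) (ha : IsStarNormal a := by cfc_tac) :
    ‖cfc f a ξ‖ ≤ ‖a ξ‖ := by
  have hle := star_cfc_mul_cfc_le (g := fun z => ‖z‖ ^ 2) hf
    (continuous_norm.pow 2).continuousOn fun z hz => pow_le_pow_left₀ (norm_nonneg _) (hfa z hz) 2
  have : cfc (fun z => ((‖z‖ ^ 2 : ℝ) : ℂ)) a = star a * a := by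
    conv_rhs => rw [← cfc_id' ℂ a, ← cfc_star, ← cfc_mul ..]
    refine cfc_congr fun z _ => ?_
    rw [star_def, conj_mul', ofReal_pow]
  rw [this] at hle
  refine (sq_le_sq₀ (norm_nonneg _) (norm_nonneg _)).1 ?_
  rw [ContinuousLinearMap.apply_norm_sq_eq_inner_adjoint_left a,
    ← ContinuousLinearMap.star_eq_adjoint]
  exact ContinuousLinearMap.norm_apply_sq_le_of_star_mul_self_le hle ξ

lemma absOp_eq_cfc_norm (x : H →L[ℂ] H) (hx : IsStarNormal x := by cfc_tac) :
    absOp x = cfc (fun z => (‖z‖ : ℂ)) x := by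
  show CFC.abs x = _
  rw [CFC.abs_eq_cfcₙ_coe_norm ℂ x, cfcₙ_eq_cfc]
  rfl

lemma absOp_cfc {f : ℂ → ℂ} (hf : ContinuousOn f (spectrum ℂ a))
    (ha : IsStarNormal a := by cfc_tac) :
    absOp (cfc f a) = cfc (fun z => (‖f z‖ : ℂ)) a := by
  rw [absOp_eq_cfc_norm (cfc f a), ← cfc_comp' (fun w => (‖w‖ : ℂ)) f a]

lemma cfc_exp_I_mul (a : H →L[ℂ] H) (ha : IsStarNormal a := by cfc_tac) :
    cfc (fun z => exp (I * z)) a = NormedSpace.exp (I • a) := by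
  rw [cfc_comp' exp (I * ·) a]
  show cfc exp (cfc (I • ·) a) = _
  rw [cfc_smul_id I a, CFC.complex_exp_eq_normedSpace_exp]

/-- `exp (i S) = exp (i T) exp (i (S - T))`, and `exp (i T)` is an isometry. -/
lemma norm_cfc_exp_I_mul_sub_apply_le {S T : H →L[ℂ] H} (hS : IsSelfAdjoint S)
    (hT : IsSelfAdjoint T) (hST : Commute S T) (ξ : H) :
    ‖(cfc (fun z => exp (I * z)) S - cfc (fun z => exp (I * z)) T) ξ‖ ≤ ‖(S - T) ξ‖ := by
  have hD : IsSelfAdjoint (S - T) := hS.sub hT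
  have hsplit : NormedSpace.exp (I • S)
      = NormedSpace.exp (I • T) * NormedSpace.exp (I • (S - T)) := by
    let _ : NormedAlgebra ℚ (H →L[ℂ] H) := .restrictScalars ℚ ℂ _
    rw [← NormedSpace.exp_add_of_commute
      (((hST.symm.sub_right (Commute.refl T)).smul_left I).smul_right I), ← smul_add,
      add_sub_cancel]
  have hunit : NormedSpace.exp (I • T) ∈ unitary (H →L[ℂ] H) :=
    (selfAdjoint.expUnitary ⟨T, hT⟩).prop
  have hD1 : NormedSpace.exp (I • (S - T)) - 1 = cfc (fun z => exp (I * z) - 1) (S - T) := by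
    rw [cfc_sub .., cfc_const_one ℂ (S - T), cfc_exp_I_mul (S - T)]
  rw [cfc_exp_I_mul S, cfc_exp_I_mul T, hsplit, ← mul_sub_one, mul_apply_eq_comp,
    ContinuousLinearMap.norm_map_of_mem_unitary hunit, hD1]
  refine norm_cfc_apply_le (by fun_prop) (fun z hz => ?_) ξ
  rw [hD.mem_spectrum_eq_re hz, norm_real]
  exact Real.norm_exp_I_mul_ofReal_sub_one_le

end FunctionalCalculus

section Logarithm

/-- Approximants of `-i log u` for the branch `arg ∈ (-π, π]`. -/
def logApprox (u : H →L[ℂ] H) (n : ℕ) : H →L[ℂ] H := cfc (fun z => (argApprox n z : ℂ)) u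

/-- Its decrease in `n` controls the increments of `logApprox u · ξ`. -/
def cutoffForm (u : H →L[ℂ] H) (ξ : H) (n : ℕ) : ℝ :=
  RCLike.re (inner ℂ (cfc (fun z => (cutoff n z.re : ℂ)) u ξ) ξ)

variable {u : H →L[ℂ] H}

lemma continuousOn_argApprox_spectrum (hu : u ∈ unitary (H →L[ℂ] H)) (n : ℕ) :
    ContinuousOn (fun z => (argApprox n z : ℂ)) (spectrum ℂ u) :=
  (continuousOn_argApprox n).mono (spectrum.subset_circle_of_unitary hu)

lemma cutoffForm_antitone (ξ : H) : Antitone (cutoffForm u ξ) := fun _ _ hnm =>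
  ContinuousLinearMap.re_inner_le_of_le
    (cfc_mono (fun z _ => real_le_real.2 (cutoff_antitone z.re hnm))) ξ

lemma cutoffForm_nonneg (ξ : H) (n : ℕ) : 0 ≤ cutoffForm u ξ n := by
  have := ContinuousLinearMap.re_inner_le_of_le
    (cfc_nonneg (a := u) fun z _ => zero_le_real.2 (cutoff_nonneg n z.re)) ξ
  simpa [cutoffForm] using this

lemma bddBelow_cutoffForm (u : H →L[ℂ] H) (ξ : H) : BddBelow (Set.range (cutoffForm u ξ)) :=
  ⟨0, by rintro _ ⟨n, rfl⟩; exact cutoffForm_nonneg ξ n⟩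

lemma re_inner_cfc_cutoff_sub (hu : u ∈ unitary (H →L[ℂ] H)) (a b : ℝ) (n m : ℕ) (ξ : H) :
    RCLike.re (inner ℂ
      (cfc (fun z => ((a * (cutoff n z.re - cutoff m z.re) + b : ℝ) : ℂ)) u ξ) ξ)
      = a * (cutoffForm u ξ n - cutoffForm u ξ m) + b * ‖ξ‖ ^ 2 := by
  have : cfc (fun z => ((a * (cutoff n z.re - cutoff m z.re) + b : ℝ) : ℂ)) u
      = (a : ℂ) • (cfc (fun z => (cutoff n z.re : ℂ)) u - cfc (fun z => (cutoff m z.re : ℂ)) u)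
        + algebraMap ℂ _ (b : ℂ) := by
    rw [← cfc_sub .., ← cfc_const_mul .., ← cfc_add_const ..]
    push_cast
    rfl
  rw [this]
  simp [cutoffForm, Algebra.algebraMap_eq_smul_one, ← ofReal_pow]

lemma norm_logApprox_sub_apply_sq_le (hu : u ∈ unitary (H →L[ℂ] H)) {n m : ℕ}
    (hnm : n ≤ m) (ξ : H) :
    ‖(logApprox u n - logApprox u m) ξ‖ ^ 2
      ≤ 4 * π ^ 2 * (cutoffForm u ξ n - cutoffForm u ξ m) := by
  have hcont := continuousOn_argApprox_spectrum hu
  have hle := star_cfc_mul_cfc_le (f := fun z => (argApprox n z : ℂ) - argApprox m z)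
    (g := fun z => 4 * π ^ 2 * (cutoff n z.re - cutoff m z.re) + 0) ((hcont n).sub (hcont m))
    (by fun_prop) fun z _ => by
      simpa [← ofReal_sub, norm_real, sq_abs] using argApprox_sub_sq_le hnm z
  have := ContinuousLinearMap.norm_apply_sq_le_of_star_mul_self_le hle ξ
  rwa [re_inner_cfc_cutoff_sub hu, zero_mul, add_zero, cfc_sub ..] at this

lemma norm_cfc_exp_logApprox_sub_apply_sq_le (hu : u ∈ unitary (H →L[ℂ] H)) (n : ℕ)
    (ξ : H) :
    ‖(cfc (fun z => exp (I * z)) (logApprox u (n + 1)) - u) ξ‖ ^ 2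
      ≤ 4 * (cutoffForm u ξ n - cutoffForm u ξ (n + 2))
        + dyadicAngle (n + 2) ^ 2 * ‖ξ‖ ^ 2 := by
  have hcont := continuousOn_argApprox_spectrum hu (n + 1)
  have hexp : cfc (fun z => exp (I * z)) (logApprox u (n + 1)) - u
      = cfc (fun z => exp (I * argApprox (n + 1) z) - z) u := by
    rw [logApprox, ← cfc_comp' (fun w => exp (I * w)) _ u, cfc_sub .., cfc_id' ℂ u]
  have hle := star_cfc_mul_cfc_le (f := fun z => exp (I * argApprox (n + 1) z) - z)
    (g := fun z => 4 * (cutoff n z.re - cutoff (n + 2) z.re) + dyadicAngle (n + 2) ^ 2)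
    (by fun_prop) (by fun_prop)
    fun z hz => norm_exp_argApprox_sub_sq_le n (by
      simpa using spectrum.subset_circle_of_unitary hu hz)
  have := ContinuousLinearMap.norm_apply_sq_le_of_star_mul_self_le hle ξ
  rwa [re_inner_cfc_cutoff_sub hu, ← hexp] at this

lemma cauchySeq_logApprox_apply (hu : u ∈ unitary (H →L[ℂ] H)) (ξ : H) :
    CauchySeq (logApprox u · ξ) :=
  cauchySeq_of_dist_sq_le (cutoffForm_antitone ξ) (bddBelow_cutoffForm u ξ) fun _ _ hnm => by
    rw [dist_eq_norm, ← sub_apply]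
    exact norm_logApprox_sub_apply_sq_le hu hnm ξ

/-- Compare `exp (i X)` with `exp (i logApprox u (n + 1))`, which commutes with `X`. -/
lemma cfc_exp_I_mul_eq_of_tendsto_logApprox (hu : u ∈ unitary (H →L[ℂ] H)) {X : H →L[ℂ] H}
    (hX : IsSelfAdjoint X) (hlim : ∀ ξ, Tendsto (logApprox u · ξ) atTop (𝓝 (X ξ))) :
    cfc (fun z => exp (I * z)) X = u := by
  ext ξ
  set E := fun T : H →L[ℂ] H => cfc (fun z => exp (I * z)) T
  have hbound : ∀ n, ‖(E X - u) ξ‖ ≤ ‖(X - logApprox u (n + 1)) ξ‖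
      + √(4 * (cutoffForm u ξ n - cutoffForm u ξ (n + 2))
        + dyadicAngle (n + 2) ^ 2 * ‖ξ‖ ^ 2) := by
    intro n
    have hcomm := ContinuousLinearMap.commute_of_tendsto_apply
      (fun m => cfc_commute_cfc _ _ u) hlim (B := logApprox u (n + 1))
    calc ‖(E X - u) ξ‖
        = ‖(E X - E (logApprox u (n + 1))) ξ + (E (logApprox u (n + 1)) - u) ξ‖ := by
          rw [← add_apply, sub_add_sub_cancel]
      _ ≤ ‖(E X - E (logApprox u (n + 1))) ξ‖ + ‖(E (logApprox u (n + 1)) - u) ξ‖ :=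
          norm_add_le _ _
      _ ≤ _ := add_le_add
          (norm_cfc_exp_I_mul_sub_apply_le hX (isSelfAdjoint_cfc_ofReal _ _) hcomm ξ)
          (Real.le_sqrt_of_sq_le (norm_cfc_exp_logApprox_sub_apply_sq_le hu n ξ))
  have hform := tendsto_atTop_ciInf (cutoffForm_antitone ξ) (bddBelow_cutoffForm u ξ)
  have hlim0 : Tendsto (fun n => ‖(X - logApprox u (n + 1)) ξ‖
      + √(4 * (cutoffForm u ξ n - cutoffForm u ξ (n + 2))
        + dyadicAngle (n + 2) ^ 2 * ‖ξ‖ ^ 2)) atTop (𝓝 0) := by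
    have h1 : Tendsto (fun n => ‖(X - logApprox u (n + 1)) ξ‖) atTop (𝓝 0) := by
      simpa [norm_sub_rev] using
        tendsto_iff_norm_sub_tendsto_zero.1 ((hlim ξ).comp (tendsto_add_atTop_nat 1))
    have h2 := (((hform.sub (hform.comp (tendsto_add_atTop_nat 2))).const_mul 4).add
      (((tendsto_dyadicAngle.comp (tendsto_add_atTop_nat 2)).pow 2).mul_const (‖ξ‖ ^ 2))).sqrt
    simpa using h1.add h2
  have := ge_of_tendsto hlim0 (Eventually.of_forall hbound)
  rwa [norm_le_zero_iff, sub_apply, sub_eq_zero] at this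

theorem exists_isSelfAdjoint_cfc_exp_I_mul_eq (N : VonNeumannAlgebra H)
    (hu : u ∈ unitary (H →L[ℂ] H)) (huN : u ∈ N) :
    ∃ X, IsSelfAdjoint X ∧ X ∈ N ∧ ‖X‖ ≤ π ∧ cfc (fun z => exp (I * z)) X = u := by
  obtain ⟨X, hX⟩ :=
    ContinuousLinearMap.exists_tendsto_apply_of_cauchySeq (cauchySeq_logApprox_apply hu)
  have hXsa := ContinuousLinearMap.isSelfAdjoint_of_tendsto_apply
    (fun _ => isSelfAdjoint_cfc_ofReal u _) hX
  refine ⟨X, hXsa, N.mem_of_tendsto_apply (fun _ => N.cfc_mem huN _) hX, ?_,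
    cfc_exp_I_mul_eq_of_tendsto_logApprox hu hXsa hX⟩
  refine ContinuousLinearMap.opNorm_le_bound _ Real.pi_pos.le fun ξ =>
    le_of_tendsto (hX ξ).norm (Eventually.of_forall fun n => ?_)
  refine (ContinuousLinearMap.le_opNorm _ ξ).trans
    (mul_le_mul_of_nonneg_right ?_ (norm_nonneg ξ))
  exact norm_cfc_le Real.pi_pos.le fun z _ => by
    rw [norm_real, Real.norm_eq_abs]
    exact abs_argApprox_le n z

end Logarithm

section Trace

variable {N : VonNeumannAlgebra H} {τ : (H →L[ℂ] H) → ℝ≥0∞} {a : H →L[ℂ] H}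

lemma normL1_nonneg (τ : (H →L[ℂ] H) → ℝ≥0∞) (x : H →L[ℂ] H) : 0 ≤ normL1 τ x :=
  add_nonneg (norm_nonneg x) ENNReal.toReal_nonneg

lemma trace_absOp_cfc_le (hτ : IsFNSTrace N τ) (haN : a ∈ N) {f g : ℂ → ℂ}
    (hf : ContinuousOn f (spectrum ℂ a)) (hg : ContinuousOn g (spectrum ℂ a)) {r : ℝ≥0}
    (hfg : ∀ z ∈ spectrum ℂ a, ‖f z‖ ≤ r * ‖g z‖) (ha : IsStarNormal a := by cfc_tac) :
    τ (absOp (cfc f a)) ≤ r * τ (absOp (cfc g a)) := by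
  rw [absOp_cfc hf, absOp_cfc hg]
  have hsmul : r • cfc (fun z => (‖g z‖ : ℂ)) a = cfc (fun z => r • (‖g z‖ : ℂ)) a :=
    (cfc_smul r _ a).symm
  have hg0 : 0 ≤ cfc (fun z => (‖g z‖ : ℂ)) a :=
    cfc_nonneg fun z _ => zero_le_real.2 (norm_nonneg _)
  calc τ (cfc (fun z => (‖f z‖ : ℂ)) a) ≤ τ (r • cfc (fun z => (‖g z‖ : ℂ)) a) := by
        refine hτ.monotone _ _ (N.cfc_mem haN _) (hsmul ▸ N.cfc_mem haN _)
          (cfc_nonneg fun z _ => zero_le_real.2 (norm_nonneg _)) ?_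
        rw [hsmul]
        refine cfc_mono fun z hz => ?_
        rw [NNReal.smul_def, real_smul, ← ofReal_mul, real_le_real]
        exact hfg z hz
    _ = r * τ (cfc (fun z => (‖g z‖ : ℂ)) a) := hτ.homogeneous r _ (N.cfc_mem haN _) hg0

lemma memL1_cfc_of_norm_le (hτ : IsFNSTrace N τ) (haN : a ∈ N) {f g : ℂ → ℂ}
    (hf : ContinuousOn f (spectrum ℂ a)) (hg : ContinuousOn g (spectrum ℂ a))
    (hg1 : MemL1 N τ (cfc g a)) {r : ℝ≥0}
    (hfg : ∀ z ∈ spectrum ℂ a, ‖f z‖ ≤ r * ‖g z‖) (ha : IsStarNormal a := by cfc_tac) :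
    MemL1 N τ (cfc f a) :=
  ⟨N.cfc_mem haN f, (trace_absOp_cfc_le hτ haN hf hg hfg).trans_lt
    (ENNReal.mul_lt_top ENNReal.coe_lt_top hg1.2)⟩

lemma normL1_cfc_le (hτ : IsFNSTrace N τ) (ha1 : MemL1 N τ a) {f : ℂ → ℂ}
    (hf : ContinuousOn f (spectrum ℂ a)) {r : ℝ≥0}
    (hfa : ∀ z ∈ spectrum ℂ a, ‖f z‖ ≤ r * ‖z‖) (ha : IsStarNormal a := by cfc_tac) :
    normL1 τ (cfc f a) ≤ r * normL1 τ a := by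
  have htr := trace_absOp_cfc_le hτ ha1.1 hf continuousOn_id hfa
  rw [cfc_id ℂ a] at htr
  have := ENNReal.toReal_mono (ENNReal.mul_ne_top ENNReal.coe_ne_top ha1.2.ne) htr
  rw [ENNReal.toReal_mul, ENNReal.coe_toReal] at this
  have := norm_cfc_le_mul_norm r.coe_nonneg hfa
  rw [normL1, normL1, mul_add]
  linarith

lemma cfc_exp_sub_cfc_exp_memL1_and_normL1_le (hτ : IsFNSTrace N τ) (ha : IsSelfAdjoint a)
    (ha1 : MemL1 N τ a) (s t : ℝ) :
    MemL1 N τ (cfc (fun z => exp (I * s * z)) a - cfc (fun z => exp (I * t * z)) a) ∧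
      normL1 τ (cfc (fun z => exp (I * s * z)) a - cfc (fun z => exp (I * t * z)) a)
        ≤ |s - t| * normL1 τ a := by
  have hbound := fun z (hz : z ∈ spectrum ℂ a) =>
    norm_exp_I_mul_real_mul_sub_le s t (ha.mem_spectrum_eq_re hz)
  rw [← cfc_sub ..]
  refine ⟨memL1_cfc_of_norm_le hτ ha1.1 (by fun_prop) continuousOn_id
    (by rwa [cfc_id ℂ a]) hbound, ?_⟩
  simpa using normL1_cfc_le hτ ha1 (by fun_prop) hbound

lemma memL1_of_memL1_cfc_exp_I_mul_sub_one (hτ : IsFNSTrace N τ) (ha : IsSelfAdjoint a)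
    (haN : a ∈ N) (hnorm : ‖a‖ ≤ π) (hexp : MemL1 N τ (cfc (fun z => exp (I * z)) a - 1)) :
    MemL1 N τ a := by
  rw [← cfc_id' ℂ a]
  refine memL1_cfc_of_norm_le hτ haN (continuousOn_id' _) (g := fun z => exp (I * z) - 1)
    (by fun_prop) (by rwa [cfc_sub .., cfc_const_one ℂ a]) (r := (π / 2).toNNReal)
    fun z hz => ?_
  rw [ha.mem_spectrum_eq_re hz, norm_real, Real.norm_eq_abs, Real.coe_toNNReal _ (by positivity)]
  exact abs_le_pi_div_two_mul_norm_exp_I_mul_sub_one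
    ((abs_re_le_norm z).trans ((norm_le_norm_of_mem_spectrum hz).trans hnorm))

end Trace

end

/-- For a unitary `u ∈ N` with `u - 1 ∈ L¹_τ(N)` there is a self-adjoint
`x ∈ L¹_τ(N)` with `‖x‖ ≤ π` and `u = e^{ix}`, and `t ↦ e^{itx}` is a path from `1` to
`u` which is continuous for the norm `‖·‖_{1,∞}`.  In particular the unitary group
`U₁(L¹_τ(N)) = {u unitary : u - 1 ∈ L¹_τ(N)}` is path connected in the
`‖·‖_{1,∞}`-topology. -/
theorem unitary_group_L1_path_connected (N : VonNeumannAlgebra H)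
    (τ : (H →L[ℂ] H) → ℝ≥0∞) (hτ : IsFNSTrace N τ)
    (u : H →L[ℂ] H) (huN : u ∈ N) (hu : star u * u = 1 ∧ u * star u = 1)
    (hu1 : MemL1 N τ (u - 1)) :
    ∃ x : H →L[ℂ] H, IsSelfAdjoint x ∧ MemL1 N τ x ∧ ‖x‖ ≤ Real.pi ∧
      u = cfc (fun z : ℂ => Complex.exp (Complex.I * z)) x ∧
      (let γ : ℝ → (H →L[ℂ] H) := fun t => cfc (fun z : ℂ => Complex.exp (Complex.I * t * z)) x
       γ 0 = 1 ∧ γ 1 = u ∧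
       (∀ t : ℝ, (star (γ t) * γ t = 1 ∧ γ t * star (γ t) = 1) ∧ MemL1 N τ (γ t - 1)) ∧
       (∀ t : ℝ, ∀ ε > (0:ℝ), ∃ δ > (0:ℝ), ∀ s : ℝ, |s - t| < δ →
          normL1 τ (γ s - γ t) < ε)) := by
  obtain ⟨X, hX, hXN, hXnorm, hXu⟩ := exists_isSelfAdjoint_cfc_exp_I_mul_eq N hu huN
  have hX1 := memL1_of_memL1_cfc_exp_I_mul_sub_one hτ hX hXN hXnorm (hXu ▸ hu1)
  refine ⟨X, hX, hX1, hXnorm, hXu.symm, ?_⟩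
  intro γ
  have hγ0 : γ 0 = 1 := by simpa [γ] using cfc_const_one ℂ X
  have hpath := cfc_exp_sub_cfc_exp_memL1_and_normL1_le hτ hX hX1
  refine ⟨hγ0, by simpa [γ] using hXu, fun t => ⟨?_, hγ0 ▸ (hpath t 0).1⟩, fun t ε hε => ?_⟩
  · refine (cfc_unitary_iff _ X).2 fun z hz => ?_
    rw [hX.mem_spectrum_eq_re hz, star_def, conj_mul', mul_assoc, ← ofReal_mul,
      norm_exp_I_mul_ofReal, ofReal_one, one_pow]
  · have hL := normL1_nonneg τ X
    refine ⟨ε / (normL1 τ X + 1), by positivity, fun s hs => (hpath s t).2.trans_lt ?_⟩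
    calc |s - t| * normL1 τ X ≤ ε / (normL1 τ X + 1) * normL1 τ X := by gcongr
      _ < ε := by
        rw [div_mul_eq_mul_div, div_lt_iff₀ (by positivity)]
        nlinarith
end
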